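/- Let f be real analytic in a neighborhood of the origin in ℝⁿ (n ≥ 2) with f(0) = 0 and f not identically zero. Then there is a neighborhood U of 0 such that ∫_U |∇f/f|ⁿ dV = ∞; in fact this holds for every sufficiently small ball centered at 0. -/

import Mathlib

/-!
Along a ray `t ↦ t • ω` on which `f` does not vanish identically, `g t = f (t • ω)` is a
nonzero analytic function of one variable with `g 0 = 0`, so its logarithmic derivative has a
simple pole at `0`: `c / t ≤ |g' t / g t| ≤ ‖∇f‖ / |f|` near `0⁺`. In polar coordinates the
`n`-th power of this bound, against the radial density `t ^ (n - 1)`, is `cⁿ / t`, which is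
not integrable at `0`. Since the directions of points of the ball where `f ≠ 0` have positive
measure on the sphere, the integral diverges.
-/

open MeasureTheory Set Metric Filter Topology Module

theorem lintegral_Ioi_eq_top_of_div_le {φ : ℝ → ENNReal} {c : ℝ} (hc : 0 < c)
    (hφ : ∀ᶠ t in 𝓝[>] 0, ENNReal.ofReal (c / t) ≤ φ t) : ∫⁻ t in Ioi 0, φ t = ⊤ := by
  obtain ⟨δ, hδ, hδφ⟩ := mem_nhdsGT_iff_exists_Ioc_subset.1 hφ
  have hinv : ¬ IntegrableOn (fun t : ℝ ↦ c / t) (Ioc 0 δ) := by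
    simp_rw [div_eq_mul_inv]
    rw [IntegrableOn, integrable_const_mul_iff (isUnit_iff_ne_zero.2 hc.ne'), ← IntegrableOn,
      ← intervalIntegrable_iff_integrableOn_Ioc_of_le (mem_Ioi.1 hδ).le]
    simp [(mem_Ioi.1 hδ).ne]
  have hdiv : ∫⁻ t in Ioc 0 δ, ENNReal.ofReal (c / t) = ⊤ := by
    by_contra hfin
    refine hinv ((lintegral_ofReal_ne_top_iff_integrable (by fun_prop) ?_).1 hfin)
    filter_upwards [ae_restrict_mem measurableSet_Ioc] with t ht
    exact div_nonneg hc.le ht.1.le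
  refine eq_top_iff.2 (hdiv.symm.le.trans ?_)
  calc ∫⁻ t in Ioc 0 δ, ENNReal.ofReal (c / t) ≤ ∫⁻ t in Ioc 0 δ, φ t :=
        setLIntegral_mono' measurableSet_Ioc fun t ht ↦ hδφ ht
    _ ≤ ∫⁻ t in Ioi 0, φ t := lintegral_mono_set Ioc_subset_Ioi_self

theorem lintegral_volumeIoiPow (n : ℕ) (g : ℝ → ENNReal) :
    ∫⁻ t, g t ∂(Measure.volumeIoiPow n) = ∫⁻ t in Ioi 0, ENNReal.ofReal (t ^ n) * g t := by
  rw [Measure.volumeIoiPow, lintegral_withDensity_eq_lintegral_mul_non_measurable _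
    (by fun_prop) (ae_of_all _ fun _ ↦ ENNReal.ofReal_lt_top)]
  exact lintegral_subtype_comap measurableSet_Ioi fun t ↦ ENNReal.ofReal (t ^ n) * g t

section PolarCoordinates

variable {E : Type*} [NormedAddCommGroup E] [InnerProductSpace ℝ E] [FiniteDimensional ℝ E]
  [MeasurableSpace E] [BorelSpace E] [Nontrivial E] (μ : Measure E) [μ.IsAddHaarMeasure]

theorem lintegral_eq_lintegral_toSphere {G : E → ENNReal} (hG : Measurable G) :
    ∫⁻ x, G x ∂μ = ∫⁻ ω, (∫⁻ t in Ioi (0 : ℝ),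
      ENNReal.ofReal (t ^ (finrank ℝ E - 1)) * G (t • (ω : E))) ∂μ.toSphere := by
  have hpolar : Measurable fun p : sphere (0 : E) 1 × Ioi (0 : ℝ) ↦ G ((p.2 : ℝ) • (p.1 : E)) :=
    hG.comp (by fun_prop)
  calc ∫⁻ x, G x ∂μ = ∫⁻ x in {0}ᶜ, G x ∂μ := by rw [restrict_compl_singleton]
    _ = ∫⁻ x : ({0}ᶜ : Set E), G x ∂(μ.comap (↑)) :=
      (lintegral_subtype_comap (measurableSet_singleton 0).compl _).symm
    _ = ∫⁻ p, G ((p.2 : ℝ) • (p.1 : E))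
          ∂(μ.toSphere.prod (Measure.volumeIoiPow (finrank ℝ E - 1))) := by
      rw [← (μ.measurePreserving_homeomorphUnitSphereProd).lintegral_comp_emb
        (Homeomorph.measurableEmbedding _)]
      refine lintegral_congr fun x ↦ ?_
      simp [smul_inv_smul₀ (norm_ne_zero_iff.2 x.2)]
    _ = _ := by
      rw [lintegral_prod _ hpolar.aemeasurable]
      exact lintegral_congr fun ω ↦ lintegral_volumeIoiPow _ fun t ↦ G (t • (ω : E))

theorem lintegral_eq_top_of_lintegral_ray_eq_top {G : E → ENNReal} (hG : Measurable G)
    {s : Set E} (hs : μ s ≠ 0)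
    (hray : ∀ x ∈ s, x ≠ 0 → ∫⁻ t in Ioi (0 : ℝ),
      ENNReal.ofReal (t ^ (finrank ℝ E - 1)) * G (t • ‖x‖⁻¹ • x) = ⊤) :
    ∫⁻ x, G x ∂μ = ⊤ := by
  -- If the integral were finite, almost no direction could have a divergent radial integral,
  -- yet the cone over such directions contains `s \ {0}`.
  by_contra hfin
  set H : sphere (0 : E) 1 → ENNReal := fun ω ↦
    ∫⁻ t in Ioi (0 : ℝ), ENNReal.ofReal (t ^ (finrank ℝ E - 1)) * G (t • (ω : E))
  have hH : Measurable H := by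
    refine Measurable.lintegral_prod_right' (f := fun p : sphere (0 : E) 1 × ℝ ↦
      ENNReal.ofReal (p.2 ^ (finrank ℝ E - 1)) * G (p.2 • (p.1 : E))) ?_
    exact (by fun_prop : Measurable fun p : sphere (0 : E) 1 × ℝ ↦ _).mul (hG.comp (by fun_prop))
  rw [lintegral_eq_lintegral_toSphere μ hG] at hfin
  have hnull : μ.toSphere {ω | H ω = ⊤} = 0 := by
    simpa [ae_iff, lt_top_iff_ne_top] using ae_lt_top hH hfin
  have hcone : s \ {0} ⊆
      (↑) '' (homeomorphUnitSphereProd E ⁻¹' ({ω | H ω = ⊤} ×ˢ univ)) := by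
    rintro x ⟨hxs, hx0⟩
    exact ⟨⟨x, hx0⟩, by simpa [H] using hray x hxs hx0, rfl⟩
  apply hs
  rw [← measure_sdiff_null (measure_singleton (0 : E))]
  refine measure_mono_null hcone ?_
  rw [← (MeasurableEmbedding.subtype_coe (measurableSet_singleton 0).compl).comap_apply,
    (μ.measurePreserving_homeomorphUnitSphereProd).measure_preimage
      ((measurableSet_eq_fun hH measurable_const).prod MeasurableSet.univ).nullMeasurableSet,
    Measure.prod_prod, hnull, zero_mul]

end PolarCoordinates

theorem AnalyticAt.exists_le_norm_mul_logDeriv {𝕜 : Type*} [NontriviallyNormedField 𝕜]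
    [CompleteSpace 𝕜] [CharZero 𝕜] {g : 𝕜 → 𝕜} {x : 𝕜} (hg : AnalyticAt 𝕜 g x) (hgx : g x = 0)
    (hne : ¬ ∀ᶠ z in 𝓝 x, g z = 0) :
    ∃ c > 0, ∀ᶠ z in 𝓝[≠] x, c ≤ ‖(z - x) * logDeriv g z‖ := by
  have hord : meromorphicOrderAt (logDeriv g) x = (-1 : ℤ) := by
    refine meromorphicOrderAt_logDeriv_eq_neg_one hg.meromorphicAt ?_ ?_ <;>
      rw [hg.meromorphicOrderAt_eq]
    · simpa [hg.analyticOrderAt_eq_zero] using hgx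
    · simpa [analyticOrderAt_eq_top] using hne
  obtain ⟨h, hh, hhx, hlog⟩ :=
    (meromorphicOrderAt_eq_int_iff (hg.meromorphicAt.deriv.div hg.meromorphicAt)).1 hord
  refine ⟨‖h x‖ / 2, by positivity, ?_⟩
  have hbig : ∀ᶠ z in 𝓝[≠] x, ‖h x‖ / 2 < ‖h z‖ :=
    (hh.continuousAt.norm.eventually (lt_mem_nhds (by simpa using hhx))).filter_mono
      nhdsWithin_le_nhds
  filter_upwards [hlog, hbig, self_mem_nhdsWithin] with z hz hbz hzx
  rw [logDeriv, hz, zpow_neg_one, smul_eq_mul, ← mul_assoc, mul_inv_cancel₀ (sub_ne_zero.2 hzx),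
    one_mul]
  exact hbz.le

theorem AnalyticOnNhd.not_eventually_eq_zero_on_ray {E F : Type*} [NormedAddCommGroup E]
    [NormedSpace ℝ E] [NormedAddCommGroup F] [NormedSpace ℝ F] {f : E → F} {R : ℝ}
    (hf : AnalyticOnNhd ℝ f (ball 0 R)) {ω : E} (hω : ‖ω‖ = 1) {t₀ : ℝ} (ht₀ : |t₀| < R)
    (hft₀ : f (t₀ • ω) ≠ 0) : ¬ ∀ᶠ t in 𝓝 (0 : ℝ), f (t • ω) = 0 := by
  have hmaps : MapsTo (fun t : ℝ ↦ t • ω) (ball 0 R) (ball 0 R) := fun t ht ↦ by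
    simpa [norm_smul, hω] using ht
  have hline : AnalyticOnNhd ℝ (fun t : ℝ ↦ f (t • ω)) (ball 0 R) :=
    hf.comp (fun t _ ↦ by fun_prop) hmaps
  intro hzero
  exact hft₀ (hline.eqOn_zero_of_preconnected_of_eventuallyEq_zero
    (convex_ball 0 R).isPreconnected (mem_ball_self ((abs_nonneg t₀).trans_lt ht₀)) hzero
    (by simpa using ht₀))

section GradientOnRays

variable {E : Type*} [NormedAddCommGroup E] [InnerProductSpace ℝ E] [CompleteSpace E]

theorem AnalyticOnNhd.continuousOn_gradient {f : E → ℝ} {s : Set E}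
    (hf : AnalyticOnNhd ℝ f s) : ContinuousOn (gradient f) s :=
  (InnerProductSpace.toDual ℝ E).symm.continuous.comp_continuousOn hf.fderiv.continuousOn

theorem abs_deriv_comp_smul_le_norm_gradient {f : E → ℝ} {ω : E} (hω : ‖ω‖ = 1) {t : ℝ}
    (hf : DifferentiableAt ℝ f (t • ω)) :
    |deriv (fun s : ℝ ↦ f (s • ω)) t| ≤ ‖gradient f (t • ω)‖ := by
  have hline : HasDerivAt (fun s : ℝ ↦ s • ω) ω t := by
    simpa using (hasDerivAt_id t).smul_const ω
  have hderiv : HasDerivAt (fun s : ℝ ↦ f (s • ω)) (fderiv ℝ f (t • ω) ω) t :=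
    hf.hasFDerivAt.comp_hasDerivAt t hline
  rw [hderiv.deriv, ← inner_gradient_left]
  simpa [hω] using abs_real_inner_le_norm (gradient f (t • ω)) ω

theorem AnalyticAt.exists_div_le_norm_gradient_div_on_ray {f : E → ℝ} (hf : AnalyticAt ℝ f 0)
    (hf0 : f 0 = 0) {ω : E} (hω : ‖ω‖ = 1) (hne : ¬ ∀ᶠ t in 𝓝 (0 : ℝ), f (t • ω) = 0) :
    ∃ c > 0, ∀ᶠ t in 𝓝[>] 0, c / t ≤ ‖gradient f (t • ω)‖ / |f (t • ω)| := by
  have hline : Tendsto (fun t : ℝ ↦ t • ω) (𝓝 0) (𝓝 0) :=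
    (continuous_id.smul continuous_const).tendsto' 0 0 (zero_smul ℝ ω)
  have hg : AnalyticAt ℝ (fun t : ℝ ↦ f (t • ω)) 0 := by
    refine AnalyticAt.comp (by simpa using hf) ?_
    fun_prop
  obtain ⟨c, hc, hlog⟩ := hg.exists_le_norm_mul_logDeriv (by simpa using hf0) hne
  refine ⟨c, hc, ?_⟩
  filter_upwards [hlog.filter_mono (nhdsGT_le_nhdsNE 0), self_mem_nhdsWithin,
    (hline.eventually hf.eventually_analyticAt).filter_mono nhdsWithin_le_nhds]
    with t hct (ht : 0 < t) hft
  rw [div_le_iff₀ ht]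
  calc c ≤ ‖(t - 0) * logDeriv (fun t : ℝ ↦ f (t • ω)) t‖ := hct
    _ = |deriv (fun s : ℝ ↦ f (s • ω)) t| / |f (t • ω)| * t := by
      rw [sub_zero, logDeriv_apply, norm_mul, Real.norm_of_nonneg ht.le, Real.norm_eq_abs,
        abs_div, mul_comm]
    _ ≤ ‖gradient f (t • ω)‖ / |f (t • ω)| * t := by
      gcongr
      exact abs_deriv_comp_smul_le_norm_gradient hω hft.differentiableAt

end GradientOnRays

section LogGradient

variable {E : Type*} [NormedAddCommGroup E] [InnerProductSpace ℝ E]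

theorem AnalyticOnNhd.lintegral_ray_eq_top [CompleteSpace E] {f : E → ℝ} {r : ℝ}
    (hf : AnalyticOnNhd ℝ f (ball 0 r)) (hf0 : f 0 = 0) {x : E} (hx : x ∈ ball 0 r)
    (hfx : f x ≠ 0) {n : ℕ} (hn : n ≠ 0) :
    ∫⁻ t in Ioi (0 : ℝ), ENNReal.ofReal (t ^ (n - 1)) *
      (ball 0 r \ {y | f y = 0}).indicator
        (fun y ↦ ENNReal.ofReal ((‖gradient f y‖ / |f y|) ^ (n : ℝ))) (t • ‖x‖⁻¹ • x) = ⊤ := by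
  have hx0 : x ≠ 0 := by
    rintro rfl
    exact hfx hf0
  have hr : 0 < r := pos_of_mem_ball hx
  set ω := ‖x‖⁻¹ • x
  have hω : ‖ω‖ = 1 := norm_smul_inv_norm hx0
  have hxω : ‖x‖ • ω = x := smul_inv_smul₀ (norm_ne_zero_iff.2 hx0) x
  obtain ⟨c, hc, hray⟩ := (hf 0 (mem_ball_self hr)).exists_div_le_norm_gradient_div_on_ray hf0 hω
    (hf.not_eventually_eq_zero_on_ray hω (t₀ := ‖x‖) (by simpa using hx) (by rwa [hxω]))
  refine lintegral_Ioi_eq_top_of_div_le (pow_pos hc n) ?_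
  filter_upwards [hray, Ioo_mem_nhdsGT hr] with t hct ⟨ht0, htr⟩
  have hq : 0 < ‖gradient f (t • ω)‖ / |f (t • ω)| := (div_pos hc ht0).trans_le hct
  have hft : f (t • ω) ≠ 0 := fun h ↦ by simp [h] at hq
  have htω : t • ω ∈ ball 0 r := by simpa [norm_smul, hω, abs_of_pos ht0] using htr
  rw [indicator_of_mem (show t • ω ∈ ball 0 r \ {y | f y = 0} from ⟨htω, hft⟩),
    ← ENNReal.ofReal_mul (by positivity)]
  refine ENNReal.ofReal_le_ofReal ?_
  calc c ^ n / t = t ^ (n - 1) * (c / t) ^ n := by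
        rw [div_pow, ← pow_sub_one_mul hn t]
        field_simp
    _ ≤ t ^ (n - 1) * (‖gradient f (t • ω)‖ / |f (t • ω)|) ^ (n : ℝ) := by
        rw [Real.rpow_natCast]
        gcongr

theorem AnalyticOnNhd.not_integrableOn_norm_gradient_div_rpow [FiniteDimensional ℝ E]
    [MeasurableSpace E] [BorelSpace E] (μ : Measure E) [μ.IsAddHaarMeasure] {f : E → ℝ} {r : ℝ}
    (hr : 0 < r) (hf : AnalyticOnNhd ℝ f (ball 0 r)) (hf0 : f 0 = 0)
    (hfne : ¬ ∀ᶠ x in 𝓝 0, f x = 0) :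
    ¬ IntegrableOn (fun x ↦ (‖gradient f x‖ / |f x|) ^ (finrank ℝ E : ℝ))
      (ball 0 r \ {x | f x = 0}) μ := by
  have : Nontrivial E := by
    refine not_subsingleton_iff_nontrivial.1 fun _ ↦ hfne (Eventually.of_forall fun x ↦ ?_)
    rwa [Subsingleton.elim x 0]
  set U := ball (0 : E) r \ {x | f x = 0}
  have hU : IsOpen U := hf.continuousOn.isOpen_inter_preimage isOpen_ball isOpen_compl_singleton
  obtain ⟨x, hx⟩ : U.Nonempty := by
    by_contra hempty
    refine hfne (eventually_of_mem (ball_mem_nhds 0 hr) fun y hy ↦ ?_)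
    by_contra hfy
    exact hempty ⟨y, hy, hfy⟩
  have hcont : ContinuousOn
      (fun x ↦ ENNReal.ofReal ((‖gradient f x‖ / |f x|) ^ (finrank ℝ E : ℝ))) U := by
    refine ENNReal.continuous_ofReal.comp_continuousOn (ContinuousOn.rpow_const ?_ ?_)
    · exact (hf.continuousOn_gradient.norm.mono sdiff_subset).div
        (hf.continuousOn.abs.mono sdiff_subset) fun y hy ↦ abs_ne_zero.2 hy.2
    · exact fun _ _ ↦ Or.inr (Nat.cast_nonneg _)
  have hG : Measurable (U.indicator
      fun x ↦ ENNReal.ofReal ((‖gradient f x‖ / |f x|) ^ (finrank ℝ E : ℝ))) := by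
    classical
    rw [← piecewise_eq_indicator]
    exact hcont.measurable_piecewise continuousOn_const hU.measurableSet
  intro hint
  have hfin := hint.lintegral_lt_top
  rw [← lintegral_indicator hU.measurableSet] at hfin
  exact hfin.ne (lintegral_eq_top_of_lintegral_ray_eq_top μ hG (hU.measure_pos μ ⟨x, hx⟩).ne'
    fun y hy _ ↦ hf.lintegral_ray_eq_top hf0 hy.1 hy.2 finrank_pos.ne')

end LogGradient

theorem stmt_5_general (n : ℕ) (f : EuclideanSpace ℝ (Fin n) → ℝ)
    (V : Set (EuclideanSpace ℝ (Fin n))) (hV : IsOpen V)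
    (h0V : (0 : EuclideanSpace ℝ (Fin n)) ∈ V)
    (hf : AnalyticOnNhd ℝ f V) (hf0 : f 0 = 0)
    (hfne : ¬ ∀ᶠ x in nhds (0 : EuclideanSpace ℝ (Fin n)), f x = 0) :
    ∃ R > (0 : ℝ), ∀ r : ℝ, 0 < r → r < R →
      ¬ IntegrableOn
        (fun x => (‖gradient f x‖ / |f x|) ^ (n : ℝ))
        (ball (0 : EuclideanSpace ℝ (Fin n)) r \ {x | f x = 0}) := by
  obtain ⟨R, hR, hRV⟩ := Metric.isOpen_iff.1 hV 0 h0V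
  refine ⟨R, hR, fun r hr hrR ↦ ?_⟩
  have := (hf.mono ((ball_subset_ball hrR.le).trans hRV)).not_integrableOn_norm_gradient_div_rpow
    volume hr hf0 hfne
  rwa [finrank_euclideanSpace_fin] at this

/-- If `f` is real analytic near `0` in `ℝⁿ` (`n ≥ 2`) with `f(0) = 0` and `f` not
identically zero near `0`, then for every sufficiently small ball `B` centered at `0`,
`∫_B |∇f/f|ⁿ dV = ∞` (i.e. the integrand is not integrable off the zero set). -/
theorem stmt_5 (n : ℕ) (hn : 2 ≤ n) (f : EuclideanSpace ℝ (Fin n) → ℝ)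
    (V : Set (EuclideanSpace ℝ (Fin n))) (hV : IsOpen V)
    (h0V : (0 : EuclideanSpace ℝ (Fin n)) ∈ V)
    (hf : AnalyticOnNhd ℝ f V) (hf0 : f 0 = 0)
    (hfne : ¬ ∀ᶠ x in nhds (0 : EuclideanSpace ℝ (Fin n)), f x = 0) :
    ∃ R > (0 : ℝ), ∀ r : ℝ, 0 < r → r < R →
      ¬ IntegrableOn
        (fun x => (‖gradient f x‖ / |f x|) ^ (n : ℝ))
        (ball (0 : EuclideanSpace ℝ (Fin n)) r \ {x | f x = 0}) :=
  stmt_5_general n f V hV h0V hf hf0 hfne
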